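/- arXiv:2002.08656 — 4 statements merged into one kernel-verified Lean document; each statement's English description precedes it below -/
import Mathlib

section
/- Let d ≥ 1 and let E ⊆ ℝ^d satisfy the interior thickness condition in ∂E with constant c > 0, i.e. |B(x,r) ∩ E| ≥ c |B(x,r)| for all x ∈ ∂E and r ∈ (0,1]. Then there is a constant c' > 0, depending only on c and d, such that |B(x,r) ∩ E| ≥ c' |B(x,r)| for all x ∈ E and r ∈ (0,1]. -/
/-!
A ball `B(x, r)` centred in `E` either has its concentric half `B(x, r/2)` inside `E`, or
`B(x, r/2)` meets both `E` and its complement and hence, being connected, contains a point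
`z ∈ ∂E`. In the second case `B(z, r/2) ⊆ B(x, r)` and the hypothesis applies to `B(z, r/2)`.
Either way `B(x, r) ∩ E` contains a set of measure at least `min c 1 · |B(z, r/2)|`, and
`|B(z, r/2)| = 2⁻ᵈ |B(x, r)|`.
-/

open MeasureTheory Metric ENNReal Set Module

theorem IsPreconnected.inter_frontier_nonempty {X : Type*} [TopologicalSpace X] {s E : Set X}
    (hs : IsPreconnected s) (hsE : (s ∩ E).Nonempty) (hsEc : (s \ E).Nonempty) :
    (s ∩ frontier E).Nonempty := by
  have := isPreconnected_iff_preconnectedSpace.mp hs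
  obtain ⟨x, hxs, hxE⟩ := hsE
  obtain ⟨w, hws, hwE⟩ := hsEc
  have hw : (⟨w, hws⟩ : s) ∉ ((↑) : s → X) ⁻¹' E := hwE
  obtain ⟨⟨z, hzs⟩, hz⟩ := (nonempty_frontier_iff (s := ((↑) : s → X) ⁻¹' E)).mpr
    ⟨⟨⟨x, hxs⟩, hxE⟩, fun h => hw (h ▸ mem_univ _)⟩
  exact ⟨z, hzs, continuous_subtype_val.frontier_preimage_subset E hz⟩

section

variable {V : Type*} [NormedAddCommGroup V] [NormedSpace ℝ V]

theorem exists_half_ball_subset_and_subset_or_mem_frontier {E : Set V} {x : V} (hx : x ∈ E)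
    {r : ℝ} (hr : 0 < r) :
    ∃ z, ball z (r / 2) ⊆ ball x r ∧ (ball z (r / 2) ⊆ E ∨ z ∈ frontier E) := by
  by_cases hsub : ball x (r / 2) ⊆ E
  · exact ⟨x, ball_subset_ball (by linarith), Or.inl hsub⟩
  obtain ⟨z, hzx, hz⟩ := (convex_ball x (r / 2)).isPreconnected.inter_frontier_nonempty
    ⟨x, mem_ball_self (half_pos hr), hx⟩ (sdiff_nonempty.mpr hsub)
  refine ⟨z, fun y hy => ?_, Or.inr hz⟩
  calc dist y x ≤ dist y z + dist z x := dist_triangle _ _ _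
    _ < r / 2 + r / 2 := add_lt_add (mem_ball.mp hy) (mem_ball.mp hzx)
    _ = r := add_halves r

variable [FiniteDimensional ℝ V] [MeasurableSpace V] [BorelSpace V] (μ : Measure V)
  [μ.IsAddHaarMeasure]

theorem addHaar_ball_eq_two_pow_mul_addHaar_ball_half (x y : V) (r : ℝ) :
    μ (ball x r) = ENNReal.ofReal (2 ^ finrank ℝ V) * μ (ball y (r / 2)) := by
  rw [Measure.addHaar_ball_center μ y, ← Measure.addHaar_ball_mul_of_pos μ x two_pos,
    mul_div_cancel₀ r two_ne_zero]

def InteriorThickIn (c : ℝ) (E F : Set V) : Prop :=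
  ∀ x ∈ F, ∀ r : ℝ, 0 < r → r ≤ 1 →
    ENNReal.ofReal c * μ (ball x r) ≤ μ (ball x r ∩ E)

theorem InteriorThickIn.of_frontier {c : ℝ} {E : Set V}
    (hE : InteriorThickIn μ c E (frontier E)) :
    InteriorThickIn μ (min c 1 / 2 ^ finrank ℝ V) E E := by
  intro x hx r hr hr1
  obtain ⟨z, hzx, hz⟩ := exists_half_ball_subset_and_subset_or_mem_frontier hx hr
  have hz_thick : ENNReal.ofReal (min c 1) * μ (ball z (r / 2)) ≤ μ (ball z (r / 2) ∩ E) := by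
    rcases hz with hzE | hzE
    · rw [inter_eq_left.mpr hzE]
      exact mul_le_of_le_one_left' (ofReal_le_one.mpr (min_le_right c 1))
    · calc ENNReal.ofReal (min c 1) * μ (ball z (r / 2))
          ≤ ENNReal.ofReal c * μ (ball z (r / 2)) := by gcongr; exact min_le_left c 1
        _ ≤ μ (ball z (r / 2) ∩ E) := hE z hzE _ (half_pos hr) (by linarith)
  calc ENNReal.ofReal (min c 1 / 2 ^ finrank ℝ V) * μ (ball x r)
      = ENNReal.ofReal (min c 1) * μ (ball z (r / 2)) := by
        rw [addHaar_ball_eq_two_pow_mul_addHaar_ball_half μ x z r, ← mul_assoc,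
          ← ENNReal.ofReal_mul' (by positivity), div_mul_cancel₀ _ (by positivity)]
    _ ≤ μ (ball z (r / 2) ∩ E) := hz_thick
    _ ≤ μ (ball x r ∩ E) := measure_mono (inter_subset_inter_left E hzx)

end

theorem itc_in_boundary_implies_itc_general (d : ℕ) (c : ℝ) (hc : 0 < c) :
    ∃ c' : ℝ, 0 < c' ∧
      ∀ E : Set (EuclideanSpace ℝ (Fin d)),
        (∀ x ∈ frontier E, ∀ r : ℝ, 0 < r → r ≤ 1 →
          ENNReal.ofReal c * volume (Metric.ball x r) ≤ volume (Metric.ball x r ∩ E)) →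
        ∀ x ∈ E, ∀ r : ℝ, 0 < r → r ≤ 1 →
          ENNReal.ofReal c' * volume (Metric.ball x r) ≤ volume (Metric.ball x r ∩ E) := by
  refine ⟨min c 1 / 2 ^ d, by positivity, fun E hE => ?_⟩
  simpa only [InteriorThickIn, finrank_euclideanSpace_fin] using
    InteriorThickIn.of_frontier volume hE

/-- If `E ⊆ ℝ^d` satisfies the interior thickness condition in `∂E`
with constant `c > 0`, then it satisfies the interior thickness condition (balls
centered in `E`) with a constant `c' > 0` depending only on `c` and `d`. -/
theorem itc_in_boundary_implies_itc (d : ℕ) (hd : 1 ≤ d) (c : ℝ) (hc : 0 < c) :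
    ∃ c' : ℝ, 0 < c' ∧
      ∀ E : Set (EuclideanSpace ℝ (Fin d)),
        (∀ x ∈ frontier E, ∀ r : ℝ, 0 < r → r ≤ 1 →
          ENNReal.ofReal c * volume (Metric.ball x r) ≤ volume (Metric.ball x r ∩ E)) →
        ∀ x ∈ E, ∀ r : ℝ, 0 < r → r ≤ 1 →
          ENNReal.ofReal c' * volume (Metric.ball x r) ≤ volume (Metric.ball x r ∩ E) :=
  itc_in_boundary_implies_itc_general d c hc
end

section
/- Let O = {(x,y) ∈ ℝ² : |y| < x² and x < 0} ∪ {(x,y) ∈ ℝ² : x > 0} and let N = ({0} × ℝ) \ {(0,0)}. Then for every δ > 0 and every c > 0 there exist z ∈ O and r ∈ (0,1] with dist(z,N) < δ and |B(z,r) ∩ O| < c |B(z,r)|. In particular, for no δ > 0 does O satisfy the interior thickness estimate uniformly at all points of O within distance δ of N. -/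
open MeasureTheory Metric ENNReal

/-!
Take `z = (-ε, 0)` and `r = ε`. The ball `B(z, ε)` lies in `{-2ε < x < 0}`, where `O` is just
the cusp `|y| < x² < 4ε²`, so `B(z, ε) ∩ O` fits in a rectangle of area `2ε · 8ε² = 16ε³`,
while `|B(z, ε)| = πε²`. The ratio `16ε/π` tends to `0`, and `dist(z, N) ≤ ε` since `N`
accumulates at the origin.
-/

theorem EuclideanSpace.volume_setOf_forall_mem {ι : Type*} [Fintype ι] (s : ι → Set ℝ) :
    volume {x : EuclideanSpace ℝ ι | ∀ i, x i ∈ s i} = ∏ i, volume (s i) := by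
  rw [← volume_pi_pi]
  convert (EuclideanSpace.volume_preserving_symm_measurableEquiv_toLp ι).measure_preimage_equiv
    (Set.univ.pi s) using 2
  ext x
  simp

def cuspHalfplane : Set (EuclideanSpace ℝ (Fin 2)) := {z | (|z 1| < z 0 ^ 2 ∧ z 0 < 0) ∨ 0 < z 0}

def puncturedYAxis : Set (EuclideanSpace ℝ (Fin 2)) := {z | z 0 = 0 ∧ z ≠ 0}

lemma neg_zero_mem_cuspHalfplane {x : ℝ} (hx : 0 < x) : !₂[-x, 0] ∈ cuspHalfplane :=
  Or.inl ⟨by simpa using pow_pos hx 2, by simpa using hx⟩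

lemma infDist_puncturedYAxis_le (x : ℝ) : infDist !₂[x, 0] puncturedYAxis ≤ |x| := by
  refine le_of_forall_pos_le_add fun t ht => ?_
  have hmem : !₂[0, t] ∈ puncturedYAxis :=
    ⟨rfl, fun h => ht.ne' (by simpa using congr_arg (· 1) h)⟩
  calc infDist !₂[x, 0] puncturedYAxis ≤ dist !₂[x, 0] !₂[0, t] := infDist_le_dist_of_mem hmem
    _ ≤ dist !₂[x, 0] 0 + dist 0 !₂[0, t] := dist_triangle _ _ _
    _ = |x| + t := by
      simp [EuclideanSpace.norm_eq, EuclideanSpace.dist_eq, Real.sqrt_sq_eq_abs, abs_of_pos ht]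

lemma ball_inter_cuspHalfplane_subset {ε : ℝ} :
    ball !₂[-ε, 0] ε ∩ cuspHalfplane ⊆
      {w | ∀ i, w i ∈ ![Set.Ioo (-(2 * ε)) 0, Set.Ioo (-(4 * ε ^ 2)) (4 * ε ^ 2)] i} := by
  rintro w ⟨hball, hO⟩
  have hw0 : |w 0 + ε| < ε := by
    simpa [Real.dist_eq] using (PiLp.dist_apply_le w !₂[-ε, 0] 0).trans_lt hball
  rw [abs_lt] at hw0
  obtain ⟨hcusp, hneg⟩ : |w 1| < w 0 ^ 2 ∧ w 0 < 0 := hO.resolve_right (by linarith)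
  have hw1 : |w 1| < 4 * ε ^ 2 := hcusp.trans (by nlinarith)
  rw [abs_lt] at hw1
  simp only [Fin.forall_fin_two, Set.mem_ofPred_eq]
  exact ⟨⟨by linarith, hneg⟩, hw1⟩

lemma volume_ball_inter_cuspHalfplane_le {ε : ℝ} (hε : 0 ≤ ε) :
    volume (ball !₂[-ε, 0] ε ∩ cuspHalfplane) ≤ .ofReal (16 * ε ^ 3) := by
  refine (measure_mono ball_inter_cuspHalfplane_subset).trans_eq ?_
  rw [EuclideanSpace.volume_setOf_forall_mem, Fin.prod_univ_two]
  simp only [Matrix.cons_val_zero, Matrix.cons_val_one, Real.volume_Ioo]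
  rw [← ENNReal.ofReal_mul (by linarith)]
  ring_nf

/-- For `O` the right half-plane with the attached cusp
`{|y| < x², x < 0}` in `ℝ²` and `N` the `y`-axis minus the origin: for every `δ > 0` and
every `c > 0` there are a point `z ∈ O` with `dist(z,N) < δ` and a radius `r ∈ (0,1]`
such that `|B(z,r) ∩ O| < c |B(z,r)|`. Hence `O` is not uniformly interior thick in any
neighborhood of `N`. -/
theorem cusp_halfplane_not_thick_near_N :
    ∀ δ : ℝ, 0 < δ → ∀ c : ℝ, 0 < c →
      ∃ z ∈ {z : EuclideanSpace ℝ (Fin 2) | (|z 1| < (z 0) ^ 2 ∧ z 0 < 0) ∨ 0 < z 0},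
        ∃ r : ℝ, 0 < r ∧ r ≤ 1 ∧
          Metric.infDist z {z : EuclideanSpace ℝ (Fin 2) | z 0 = 0 ∧ z ≠ 0} < δ ∧
          volume (Metric.ball z r ∩
              ({z : EuclideanSpace ℝ (Fin 2) | (|z 1| < (z 0) ^ 2 ∧ z 0 < 0) ∨ 0 < z 0})) <
            ENNReal.ofReal c * volume (Metric.ball z r) := by
  intro δ hδ c hc
  set ε := min (δ / 2) (min 1 (c * Real.pi / 32))
  have hε : 0 < ε := by positivity
  have hεδ : ε ≤ δ / 2 := min_le_left _ _
  have hεc : ε ≤ c * Real.pi / 32 := (min_le_right _ _).trans (min_le_right _ _)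
  refine ⟨!₂[-ε, 0], neg_zero_mem_cuspHalfplane hε, ε, hε,
    (min_le_right _ _).trans (min_le_left _ _), ?_, ?_⟩
  · calc _ ≤ |-ε| := infDist_puncturedYAxis_le (-ε)
      _ < δ := by rw [abs_neg, abs_of_pos hε]; linarith
  · calc _ ≤ ENNReal.ofReal (16 * ε ^ 3) := volume_ball_inter_cuspHalfplane_le hε.le
      _ < ENNReal.ofReal c * volume (ball !₂[-ε, 0] ε) := by
        rw [EuclideanSpace.volume_ball_fin_two, ← ofReal_pow hε.le, ← ofReal_mul (by positivity),
          ← ofReal_mul hc.le, ofReal_lt_ofReal_iff (by positivity)]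
        nlinarith [Real.pi_pos, mul_pos hc Real.pi_pos, pow_pos hε 2]
end

section
/- Let d ≥ 1, let O ⊆ ℝ^d be open, D ⊆ ∂O, N = ∂O \ D. Let (Q_j)_j be a countable, pairwise disjoint family of open axis-parallel cubes in ℝ^d with ⋃_j cl(Q_j) = ℝ^d \ cl(N) and diam(Q_j) ≤ dist(Q_j, N) ≤ 4 diam(Q_j) for every j. Set Σ = {Q_j : cl(Q_j) ∩ cl(O) ≠ ∅} and 𝑶 = O ∪ ⋃_{Q ∈ Σ} (Q \ D). Then 𝑶 is open, O ⊆ 𝑶, and ∂O ⊆ ∂𝑶. -/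
/-!
Inside a cube `Q` the excised set `D` may be replaced by all of `∂O`: the cubes avoid
`cl(N) ⊇ ∂O \ D`. Hence `𝑶` is a union of open sets, none of which meets `∂O`, and an open
superset `U ⊇ O` with `U ∩ ∂O = ∅` has `∂O ⊆ cl(U) \ U = ∂U`.
-/

open MeasureTheory Metric ENNReal

/-- An open axis-parallel cube in `ℝ^d`. -/
def IsOpenCube (d : ℕ) (Q : Set (EuclideanSpace ℝ (Fin d))) : Prop :=
  ∃ (a : EuclideanSpace ℝ (Fin d)) (ℓ : ℝ), 0 < ℓ ∧
    Q = {x : EuclideanSpace ℝ (Fin d) | ∀ i, x i ∈ Set.Ioo (a i) (a i + ℓ)}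

/-- The (extended) distance `dist(A,B) = inf {edist y z : y ∈ A, z ∈ B}` between two
sets; it equals `∞` if either set is empty. -/
noncomputable def setEDist (d : ℕ) (A B : Set (EuclideanSpace ℝ (Fin d))) : ℝ≥0∞ :=
  ⨅ x ∈ A, EMetric.infEdist x B

lemma IsOpenCube.isOpen {d : ℕ} {Q : Set (EuclideanSpace ℝ (Fin d))}
    (h : IsOpenCube d Q) : IsOpen Q := by
  obtain ⟨a, ℓ, -, rfl⟩ := h
  rw [Set.ofPred_forall]
  exact isOpen_iInter_of_finite fun i => isOpen_Ioo.preimage (EuclideanSpace.proj i).continuous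

lemma Set.diff_eq_diff_of_disjoint_diff {α : Type*} {Q D F : Set α} (hDF : D ⊆ F)
    (hQ : Disjoint Q (F \ D)) : Q \ D = Q \ F := by
  ext x
  constructor
  · exact fun ⟨hxQ, hxD⟩ => ⟨hxQ, fun hxF => hQ.le_bot ⟨hxQ, hxF, hxD⟩⟩
  · exact fun ⟨hxQ, hxF⟩ => ⟨hxQ, fun hxD => hxF (hDF hxD)⟩

lemma frontier_subset_frontier_of_subset_of_disjoint {X : Type*} [TopologicalSpace X]
    {O U : Set X} (hU : IsOpen U) (hOU : O ⊆ U) (hUO : Disjoint U (frontier O)) :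
    frontier O ⊆ frontier U := by
  rw [hU.frontier_eq]
  exact fun x hx => ⟨closure_mono hOU (frontier_subset_closure hx), fun hxU => hUO.le_bot ⟨hxU, hx⟩⟩

theorem fattened_set_basic_properties_general (d : ℕ)
    (O D N : Set (EuclideanSpace ℝ (Fin d))) (hO : IsOpen O) (hD : D ⊆ frontier O)
    (hN : N = frontier O \ D)
    (ι : Type) (Q : ι → Set (EuclideanSpace ℝ (Fin d)))
    (hcube : ∀ j, IsOpenCube d (Q j))
    (hcover : (⋃ j, closure (Q j)) = (closure N)ᶜ) :
    IsOpen (O ∪ ⋃ j ∈ {j | (closure (Q j) ∩ closure O).Nonempty}, (Q j \ D)) ∧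
    O ⊆ O ∪ ⋃ j ∈ {j | (closure (Q j) ∩ closure O).Nonempty}, (Q j \ D) ∧
    frontier O ⊆
      frontier (O ∪ ⋃ j ∈ {j | (closure (Q j) ∩ closure O).Nonempty}, (Q j \ D)) := by
  set U := O ∪ ⋃ j ∈ {j | (closure (Q j) ∩ closure O).Nonempty}, (Q j \ D)
  have hQN : ∀ j, Disjoint (Q j) N := fun j =>
    (Set.subset_compl_iff_disjoint_right.mp <| subset_closure.trans <| hcover ▸
      Set.subset_iUnion (fun j => closure (Q j)) j).mono_right subset_closure
  have hpiece : ∀ j, Q j \ D = Q j \ frontier O := fun j =>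
    Set.diff_eq_diff_of_disjoint_diff hD (hN ▸ hQN j)
  have hopen : IsOpen U :=
    hO.union <| isOpen_biUnion fun j _ => hpiece j ▸ (hcube j).isOpen.sdiff isClosed_frontier
  have hdisj : Disjoint U (frontier O) :=
    (disjoint_frontier_iff_isOpen.mpr hO).symm.union_left <|
      Set.disjoint_iUnion₂_left.mpr fun j _ => hpiece j ▸ Set.disjoint_sdiff_left
  exact ⟨hopen, Set.subset_union_left,
    frontier_subset_frontier_of_subset_of_disjoint hopen Set.subset_union_left hdisj⟩

/-- Let `O ⊆ ℝ^d` be open, `D ⊆ ∂O`, `N = ∂O \ D`, and let `(Q_j)` be a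
countable pairwise disjoint family of open axis-parallel cubes with
`⋃ cl(Q_j) = ℝ^d \ cl(N)` and `diam Q_j ≤ dist(Q_j,N) ≤ 4 diam Q_j`. With
`Σ = {Q_j : cl(Q_j) ∩ cl(O) ≠ ∅}` and `𝑶 = O ∪ ⋃_{Q ∈ Σ} (Q \ D)`, the set `𝑶` is open,
contains `O`, and `∂O ⊆ ∂𝑶`. -/
theorem fattened_set_basic_properties (d : ℕ) (hd : 1 ≤ d)
    (O D N : Set (EuclideanSpace ℝ (Fin d))) (hO : IsOpen O) (hD : D ⊆ frontier O)
    (hN : N = frontier O \ D)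
    (ι : Type) [Countable ι] (Q : ι → Set (EuclideanSpace ℝ (Fin d)))
    (hcube : ∀ j, IsOpenCube d (Q j))
    (hdisj : Pairwise (Function.onFun Disjoint Q))
    (hcover : (⋃ j, closure (Q j)) = (closure N)ᶜ)
    (hwhitney : ∀ j, EMetric.diam (Q j) ≤ setEDist d (Q j) N ∧
      setEDist d (Q j) N ≤ 4 * EMetric.diam (Q j)) :
    IsOpen (O ∪ ⋃ j ∈ {j | (closure (Q j) ∩ closure O).Nonempty}, (Q j \ D)) ∧
    O ⊆ O ∪ ⋃ j ∈ {j | (closure (Q j) ∩ closure O).Nonempty}, (Q j \ D) ∧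
    frontier O ⊆
      frontier (O ∪ ⋃ j ∈ {j | (closure (Q j) ∩ closure O).Nonempty}, (Q j \ D)) :=
  fattened_set_basic_properties_general d O D N hO hD hN ι Q hcube hcover
end

section
/- Let d ≥ 1, p ∈ (0,∞), s ∈ (0,1), let O ⊆ U ⊆ ℝ^d be measurable sets, let D ⊆ ℝ^d be nonempty, and let κ > 0 be such that |x − y| ≥ κ dist(x,D) for all x ∈ O and y ∈ U \ O. Let f : O → ℝ be measurable and let f₀ : U → ℝ be its extension by zero (f₀ = f on O, f₀ = 0 on U \ O). Then there is a constant C > 0, depending only on d, s, p and κ, such that ∬_{x,y ∈ U, |x−y|<1} |f₀(x) − f₀(y)|^p / |x−y|^{sp+d} dy dx ≤ ∬_{x,y ∈ O, |x−y|<1} |f(x) − f(y)|^p / |x−y|^{sp+d} dy dx + C ∫_O |f(x)|^p dist(x,D)^{-sp} dx. -/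
open MeasureTheory Metric ENNReal

/-- The `p`-th power of the fractional Sobolev seminorm `[f]_{W^{s,p}(U)}`. -/
noncomputable def gagliardoPow (d : ℕ) (s p : ℝ) (U : Set (EuclideanSpace ℝ (Fin d)))
    (f : EuclideanSpace ℝ (Fin d) → ℝ) : ℝ≥0∞ :=
  ∫⁻ x in U, ∫⁻ y in U ∩ {y | dist x y < 1},
    ENNReal.ofReal (|f x - f y| ^ p / dist x y ^ (s * p + d))

/-- The fractional Hardy term `∫_U |f(x)|^p dist(x,D)^{-sp} dx`, with the convention
`0^{-sp} = ∞` taken in `ℝ≥0∞`. -/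
noncomputable def hardyPow (d : ℕ) (s p : ℝ) (U D : Set (EuclideanSpace ℝ (Fin d)))
    (f : EuclideanSpace ℝ (Fin d) → ℝ) : ℝ≥0∞ :=
  ∫⁻ x in U, ENNReal.ofReal (|f x| ^ p) * ENNReal.ofReal (Metric.infDist x D) ^ (-(s * p))

/-! Split `U × U` into the blocks `O × O`, `O × (U \ O)`, `(U \ O) × O` and `(U \ O) × (U \ O)`.
The zero extension agrees with `f` on the first block and vanishes on the last, and the two mixed
blocks contribute equally since the kernel is symmetric. On `O × (U \ O)` the integrand is
`|f x|^p |x - y|^{-(sp+d)}` with `|x - y| ≥ κ dist(x, D)`, so the inner integral is at most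
`|f x|^p` times the tail `∫_{|y| ≥ R} |y|^{-(sp+d)} dy = R^{-sp} ∫_{|y| ≥ 1} |y|^{-(sp+d)} dy`
at `R = κ dist(x, D)`, and the last integral is finite because `sp > 0`. -/

open Set Module

section Tail

variable {E : Type*} [NormedAddCommGroup E] [NormedSpace ℝ E] [FiniteDimensional ℝ E]
  [MeasurableSpace E] [BorelSpace E] (μ : Measure E) [μ.IsAddHaarMeasure]

theorem ofReal_pow_finrank_mul_lintegral_comp_smul (F : E → ℝ≥0∞) {R : ℝ} (hR : 0 < R) :
    ENNReal.ofReal (R ^ finrank ℝ E) * ∫⁻ x, F (R • x) ∂μ = ∫⁻ x, F x ∂μ := by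
  have hRn : 0 < R ^ finrank ℝ E := by positivity
  have h := lintegral_map_equiv F (MeasurableEquiv.smul₀ R hR.ne') (μ := μ)
  simp only [MeasurableEquiv.coe_smul₀] at h
  rw [← h, Measure.map_addHaar_smul μ hR.ne', lintegral_smul_measure, smul_eq_mul, ← mul_assoc,
    ← ENNReal.ofReal_mul hRn.le, abs_of_pos (inv_pos.2 hRn), mul_inv_cancel₀ hRn.ne',
    ENNReal.ofReal_one, one_mul]

theorem setLIntegral_le_norm_rpow_neg_eq_rpow_mul (q : ℝ) {R : ℝ} (hR : 0 < R) :
    ∫⁻ y in {y | R ≤ ‖y‖}, ENNReal.ofReal (‖y‖ ^ (-(q + finrank ℝ E))) ∂μ =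
      ENNReal.ofReal (R ^ (-q)) *
        ∫⁻ y in {y | 1 ≤ ‖y‖}, ENNReal.ofReal (‖y‖ ^ (-(q + finrank ℝ E))) ∂μ := by
  set n := finrank ℝ E
  have hmeas : ∀ r : ℝ, MeasurableSet {y : E | r ≤ ‖y‖} :=
    fun r ↦ measurableSet_le measurable_const measurable_norm
  rw [← lintegral_indicator (hmeas R), ← lintegral_indicator (hmeas 1),
    ← ofReal_pow_finrank_mul_lintegral_comp_smul μ _ hR]
  have hscale : ∀ x : E, {y : E | R ≤ ‖y‖}.indicator (fun y ↦ ENNReal.ofReal (‖y‖ ^ (-(q + n))))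
      (R • x) = ENNReal.ofReal (R ^ (-(q + n))) *
        {y : E | 1 ≤ ‖y‖}.indicator (fun y ↦ ENNReal.ofReal (‖y‖ ^ (-(q + n)))) x := by
    intro x
    simp only [indicator, mem_ofPred_eq, norm_smul, Real.norm_of_nonneg hR.le,
      le_mul_iff_one_le_right hR]
    split_ifs
    · rw [← ENNReal.ofReal_mul (by positivity), Real.mul_rpow hR.le (norm_nonneg _)]
    · simp
  have hpow : R ^ n * R ^ (-(q + n)) = R ^ (-q) := by
    rw [← Real.rpow_natCast, ← Real.rpow_add hR]
    ring_nf
  rw [lintegral_congr hscale, lintegral_const_mul' _ _ ofReal_ne_top, ← mul_assoc,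
    ← ENNReal.ofReal_mul (by positivity), hpow]

theorem setLIntegral_one_le_norm_rpow_neg_lt_top {q : ℝ} (hq : 0 < q) :
    ∫⁻ y in {y | 1 ≤ ‖y‖}, ENNReal.ofReal (‖y‖ ^ (-(q + finrank ℝ E))) ∂μ < ∞ := by
  set r := q + finrank ℝ E
  have hr : 0 < r := by positivity
  -- `1 + ‖y‖ ≤ 2 ‖y‖` on `{1 ≤ ‖y‖}` reduces this to the integrability of `(1 + ‖y‖) ^ (-r)`
  have hcomp : ∀ y ∈ {y : E | 1 ≤ ‖y‖},
      ENNReal.ofReal (‖y‖ ^ (-r)) ≤ ENNReal.ofReal (2 ^ r) * ENNReal.ofReal ((1 + ‖y‖) ^ (-r)) := by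
    intro y hy
    have hy0 : 0 < ‖y‖ := one_pos.trans_le hy
    rw [← ENNReal.ofReal_mul (by positivity)]
    gcongr
    calc ‖y‖ ^ (-r) = 2 ^ r * (2 * ‖y‖) ^ (-r) := by
          rw [Real.mul_rpow zero_le_two hy0.le, ← mul_assoc, Real.rpow_neg zero_le_two,
            mul_inv_cancel₀ (by positivity), one_mul]
      _ ≤ 2 ^ r * (1 + ‖y‖) ^ (-r) := by
          have hy : 1 ≤ ‖y‖ := hy
          gcongr 2 ^ r * ?_
          exact Real.rpow_le_rpow_of_nonpos (by positivity) (by linarith) (by linarith)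
  calc ∫⁻ y in {y | 1 ≤ ‖y‖}, ENNReal.ofReal (‖y‖ ^ (-r)) ∂μ
      ≤ ∫⁻ y in {y | 1 ≤ ‖y‖}, ENNReal.ofReal (2 ^ r) * ENNReal.ofReal ((1 + ‖y‖) ^ (-r)) ∂μ :=
        setLIntegral_mono' (measurableSet_le measurable_const measurable_norm) hcomp
    _ ≤ ∫⁻ y, ENNReal.ofReal (2 ^ r) * ENNReal.ofReal ((1 + ‖y‖) ^ (-r)) ∂μ :=
        setLIntegral_le_lintegral _ _
    _ < ∞ := by
        rw [lintegral_const_mul' _ _ ofReal_ne_top]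
        exact mul_lt_top ofReal_lt_top (finite_integral_one_add_norm (by simp [r, hq]))

theorem exists_setLIntegral_le_dist_rpow_neg_le {q : ℝ} (hq : 0 < q) :
    ∃ C : ℝ, 0 < C ∧ ∀ (x : E) (R : ℝ), 0 < R →
      ∫⁻ y in {y | R ≤ dist x y}, ENNReal.ofReal (dist x y ^ (-(q + finrank ℝ E))) ∂μ ≤
        ENNReal.ofReal C * ENNReal.ofReal (R ^ (-q)) := by
  set T := ∫⁻ y in {y | 1 ≤ ‖y‖}, ENNReal.ofReal (‖y‖ ^ (-(q + finrank ℝ E))) ∂μ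
  -- `T` is finite but vanishes when `E` is trivial, hence the `+ 1`
  refine ⟨T.toReal + 1, by positivity, fun x R hR ↦ ?_⟩
  set h : ℝ → ℝ≥0∞ := fun t ↦ ENNReal.ofReal (t ^ (-(q + finrank ℝ E)))
  have htranslate : ∀ g : ℝ → ℝ≥0∞, ∫⁻ y, g (dist x y) ∂μ = ∫⁻ y, g ‖y‖ ∂μ := fun g ↦ by
    simpa [dist_eq_norm, norm_sub_rev] using lintegral_sub_right_eq_self (fun y ↦ g ‖y‖) x (μ := μ)
  have hT : T ≤ ENNReal.ofReal (T.toReal + 1) := by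
    rw [ENNReal.le_ofReal_iff_toReal_le (setLIntegral_one_le_norm_rpow_neg_lt_top μ hq).ne
      (by positivity)]
    linarith
  calc ∫⁻ y in {y | R ≤ dist x y}, h (dist x y) ∂μ = ∫⁻ y, (Ici R).indicator h (dist x y) ∂μ :=
        (lintegral_indicator (measurableSet_le measurable_const
          (measurable_const.dist measurable_id)) _).symm
    _ = ∫⁻ y in {y | R ≤ ‖y‖}, h ‖y‖ ∂μ :=
        (htranslate _).trans
          (lintegral_indicator (measurableSet_le measurable_const measurable_norm) _)
    _ = ENNReal.ofReal (R ^ (-q)) * T := setLIntegral_le_norm_rpow_neg_eq_rpow_mul μ q hR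
    _ ≤ ENNReal.ofReal (T.toReal + 1) * ENNReal.ofReal (R ^ (-q)) := by
        rw [mul_comm]; gcongr

theorem exists_setLIntegral_dist_rpow_neg_le_infDist {q κ : ℝ} (hq : 0 < q) (hκ : 0 < κ) :
    ∃ C : ℝ, 0 < C ∧ ∀ (W D : Set E) (x : E), (∀ y ∈ W, κ * infDist x D ≤ dist x y) →
      ∫⁻ y in W, ENNReal.ofReal (dist x y ^ (-(q + finrank ℝ E))) ∂μ ≤
        ENNReal.ofReal C * ENNReal.ofReal (infDist x D) ^ (-q) := by
  obtain ⟨C, hC, htail⟩ := exists_setLIntegral_le_dist_rpow_neg_le μ hq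
  refine ⟨C * κ ^ (-q), by positivity, fun W D x hW ↦ ?_⟩
  rcases (infDist_nonneg (x := x) (s := D)).eq_or_lt with hzero | hpos
  · rw [← hzero, ENNReal.ofReal_zero, ENNReal.zero_rpow_of_neg (by linarith),
      ENNReal.mul_top (ENNReal.ofReal_pos.2 (by positivity)).ne']
    exact le_top
  calc ∫⁻ y in W, ENNReal.ofReal (dist x y ^ (-(q + finrank ℝ E))) ∂μ
      ≤ ∫⁻ y in {y | κ * infDist x D ≤ dist x y},
          ENNReal.ofReal (dist x y ^ (-(q + finrank ℝ E))) ∂μ := lintegral_mono_set hW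
    _ ≤ ENNReal.ofReal C * ENNReal.ofReal ((κ * infDist x D) ^ (-q)) := htail x _ (by positivity)
    _ = ENNReal.ofReal (C * κ ^ (-q)) * ENNReal.ofReal (infDist x D) ^ (-q) := by
        rw [Real.mul_rpow hκ.le hpos.le, ENNReal.ofReal_mul (by positivity),
          ENNReal.ofReal_mul hC.le, ENNReal.ofReal_rpow_of_pos hpos, mul_assoc]

end Tail

section Gagliardo

variable {X : Type*} [PseudoMetricSpace X]

noncomputable def gagliardoKernel (t p : ℝ) (g : X → ℝ) (z : X × X) : ℝ≥0∞ :=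
  {z : X × X | dist z.1 z.2 < 1}.indicator
    (fun z ↦ ENNReal.ofReal (|g z.1 - g z.2| ^ p / dist z.1 z.2 ^ t)) z

theorem gagliardoKernel_swap (t p : ℝ) (g : X → ℝ) (z : X × X) :
    gagliardoKernel t p g z.swap = gagliardoKernel t p g z := by
  simp only [gagliardoKernel, indicator_apply, mem_ofPred_eq, Prod.fst_swap, Prod.snd_swap,
    dist_comm z.2, abs_sub_comm (g z.2)]

theorem gagliardoKernel_le (t p : ℝ) (g : X → ℝ) (z : X × X) :
    gagliardoKernel t p g z ≤
      ENNReal.ofReal (|g z.1 - g z.2| ^ p) * ENNReal.ofReal (dist z.1 z.2 ^ (-t)) := by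
  rw [← ENNReal.ofReal_mul (by positivity), Real.rpow_neg dist_nonneg, ← div_eq_mul_inv]
  exact indicator_le_self _ _ z

theorem gagliardoKernel_congr (t p : ℝ) {g g' : X → ℝ} {z : X × X} (h₁ : g z.1 = g' z.1)
    (h₂ : g z.2 = g' z.2) : gagliardoKernel t p g z = gagliardoKernel t p g' z := by
  simp only [gagliardoKernel, indicator_apply, h₁, h₂]

theorem gagliardoKernel_eq_zero_of_eq {t p : ℝ} (hp : p ≠ 0) {g : X → ℝ} {z : X × X}
    (hz : g z.1 = g z.2) : gagliardoKernel t p g z = 0 := by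
  simp [gagliardoKernel, indicator_apply, hz, Real.zero_rpow hp]

variable [MeasurableSpace X]

theorem setLIntegral_prod_gagliardoKernel_indicator_self {μ : Measure X} (t p : ℝ) {O : Set X}
    (hO : MeasurableSet O) (f : X → ℝ) :
    ∫⁻ z in O ×ˢ O, gagliardoKernel t p (O.indicator f) z ∂μ.prod μ =
      ∫⁻ z in O ×ˢ O, gagliardoKernel t p f z ∂μ.prod μ :=
  setLIntegral_congr_fun (hO.prod hO) fun _ hz ↦
    gagliardoKernel_congr t p (indicator_of_mem hz.1 f) (indicator_of_mem hz.2 f)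

theorem setLIntegral_prod_gagliardoKernel_indicator_of_disjoint {μ : Measure X} (t : ℝ) {p : ℝ}
    (hp : p ≠ 0) {O V : Set X} (hOV : Disjoint O V) (f : X → ℝ) :
    ∫⁻ z in V ×ˢ V, gagliardoKernel t p (O.indicator f) z ∂μ.prod μ = 0 := by
  refine nonpos_iff_eq_zero.1 <| (setLIntegral_mono measurable_zero fun z hz ↦ ?_).trans_eq
    lintegral_zero
  refine (gagliardoKernel_eq_zero_of_eq hp ?_).le
  rw [indicator_of_notMem (hOV.notMem_of_mem_right hz.1),
    indicator_of_notMem (hOV.notMem_of_mem_right hz.2)]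

variable [BorelSpace X] [SecondCountableTopology X]

theorem measurable_gagliardoKernel (t p : ℝ) {g : X → ℝ} (hg : Measurable g) :
    Measurable (gagliardoKernel t p g) :=
  Measurable.indicator (by fun_prop) (measurableSet_lt measurable_dist measurable_const)

theorem setLIntegral_prod_gagliardoKernel_indicator_le {μ : Measure X} [SFinite μ] (t p : ℝ)
    {O V : Set X} (hO : MeasurableSet O) (hOV : Disjoint O V) (f : X → ℝ) (w : X → ℝ≥0∞)
    (hw : ∀ x ∈ O, ∫⁻ y in V, ENNReal.ofReal (dist x y ^ (-t)) ∂μ ≤ w x) :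
    ∫⁻ z in O ×ˢ V, gagliardoKernel t p (O.indicator f) z ∂μ.prod μ ≤
      ∫⁻ x in O, ENNReal.ofReal (|f x| ^ p) * w x ∂μ := by
  rw [← Measure.prod_restrict]
  refine (lintegral_prod_le _).trans (setLIntegral_mono' hO fun x hx ↦ ?_)
  calc ∫⁻ y in V, gagliardoKernel t p (O.indicator f) (x, y) ∂μ
      ≤ ∫⁻ y in V, ENNReal.ofReal (|f x| ^ p) * ENNReal.ofReal (dist x y ^ (-t)) ∂μ := by
        refine setLIntegral_mono (by fun_prop) fun y hy ↦ ?_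
        simpa [indicator_of_mem hx, indicator_of_notMem (hOV.notMem_of_mem_right hy)] using
          gagliardoKernel_le t p (O.indicator f) (x, y)
    _ = ENNReal.ofReal (|f x| ^ p) * ∫⁻ y in V, ENNReal.ofReal (dist x y ^ (-t)) ∂μ :=
        lintegral_const_mul' _ _ ofReal_ne_top
    _ ≤ ENNReal.ofReal (|f x| ^ p) * w x := by gcongr; exact hw x hx

end Gagliardo

section ProductSets

variable {α : Type*} [MeasurableSpace α]

theorem setLIntegral_union_prod_union_le (ν : Measure (α × α)) (f : α × α → ℝ≥0∞)
    (A B : Set α) :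
    ∫⁻ z in (A ∪ B) ×ˢ (A ∪ B), f z ∂ν ≤
      ∫⁻ z in A ×ˢ A, f z ∂ν + ∫⁻ z in A ×ˢ B, f z ∂ν + ∫⁻ z in B ×ˢ A, f z ∂ν +
        ∫⁻ z in B ×ˢ B, f z ∂ν := by
  rw [union_prod, prod_union, prod_union]
  exact (lintegral_union_le _ _ _).trans <|
    (add_le_add (lintegral_union_le _ _ _) (lintegral_union_le _ _ _)).trans_eq
      (add_assoc _ _ _).symm

theorem setLIntegral_prod_comm_of_swap_eq (μ : Measure α) [SFinite μ] {f : α × α → ℝ≥0∞}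
    (hf : ∀ z, f z.swap = f z) (A B : Set α) :
    ∫⁻ z in A ×ˢ B, f z ∂μ.prod μ = ∫⁻ z in B ×ˢ A, f z ∂μ.prod μ := by
  rw [← Measure.prod_restrict, ← Measure.prod_restrict, ← lintegral_prod_swap]
  simp only [hf]

end ProductSets

theorem gagliardoPow_eq_setLIntegral_prod {d : ℕ} {s p : ℝ} (U : Set (EuclideanSpace ℝ (Fin d)))
    {g : EuclideanSpace ℝ (Fin d) → ℝ} (hg : Measurable g) :
    gagliardoPow d s p U g = ∫⁻ z in U ×ˢ U, gagliardoKernel (s * p + d) p g z := by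
  rw [Measure.volume_eq_prod, setLIntegral_prod _ (measurable_gagliardoKernel _ _ hg).aemeasurable]
  refine lintegral_congr fun x ↦ ?_
  rw [inter_comm, ← setLIntegral_indicator (measurableSet_lt (by fun_prop) measurable_const)]
  rfl

theorem zero_extension_estimate_general (d : ℕ) (s p κ : ℝ)
    (hs0 : 0 < s) (hp : 0 < p) (hκ : 0 < κ) :
    ∃ C : ℝ, 0 < C ∧
      ∀ O U D : Set (EuclideanSpace ℝ (Fin d)),
        MeasurableSet O → MeasurableSet U → O ⊆ U → D.Nonempty →
        (∀ x ∈ O, ∀ y ∈ U \ O, κ * Metric.infDist x D ≤ dist x y) →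
        ∀ f : EuclideanSpace ℝ (Fin d) → ℝ, Measurable f →
          gagliardoPow d s p U (O.indicator f) ≤
            gagliardoPow d s p O f + ENNReal.ofReal C * hardyPow d s p O D f := by
  obtain ⟨C, hC, hfar⟩ := exists_setLIntegral_dist_rpow_neg_le_infDist
    (volume : Measure (EuclideanSpace ℝ (Fin d))) (mul_pos hs0 hp) hκ
  rw [finrank_euclideanSpace_fin] at hfar
  refine ⟨2 * C, by positivity, fun O U D hO _ hOU _ hsep f hf ↦ ?_⟩
  set K := gagliardoKernel (s * p + d) p (O.indicator f)
  have hinner : ∫⁻ z in O ×ˢ O, K z = gagliardoPow d s p O f := by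
    rw [gagliardoPow_eq_setLIntegral_prod O hf]
    exact setLIntegral_prod_gagliardoKernel_indicator_self _ p hO f
  have houter : ∫⁻ z in (U \ O) ×ˢ (U \ O), K z = 0 :=
    setLIntegral_prod_gagliardoKernel_indicator_of_disjoint _ hp.ne' disjoint_sdiff_right f
  have hcross : ∫⁻ z in O ×ˢ (U \ O), K z ≤ ENNReal.ofReal C * hardyPow d s p O D f := by
    refine (setLIntegral_prod_gagliardoKernel_indicator_le _ p hO disjoint_sdiff_right f _
      fun x hx ↦ hfar _ D x (hsep x hx)).trans_eq ?_
    rw [hardyPow, ← lintegral_const_mul' _ _ ofReal_ne_top]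
    exact lintegral_congr fun x ↦ by ring
  have hswap : ∫⁻ z in (U \ O) ×ˢ O, K z = ∫⁻ z in O ×ˢ (U \ O), K z :=
    setLIntegral_prod_comm_of_swap_eq volume (gagliardoKernel_swap _ _ _) _ _
  calc gagliardoPow d s p U (O.indicator f)
      = ∫⁻ z in (O ∪ U \ O) ×ˢ (O ∪ U \ O), K z := by
        rw [union_sdiff_cancel hOU]; exact gagliardoPow_eq_setLIntegral_prod U (hf.indicator hO)
    _ ≤ (∫⁻ z in O ×ˢ O, K z) + (∫⁻ z in O ×ˢ (U \ O), K z) + (∫⁻ z in (U \ O) ×ˢ O, K z) +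
          ∫⁻ z in (U \ O) ×ˢ (U \ O), K z := setLIntegral_union_prod_union_le _ _ _ _
    _ = gagliardoPow d s p O f + 2 * ∫⁻ z in O ×ˢ (U \ O), K z := by
        rw [hinner, houter, hswap]
        ring
    _ ≤ gagliardoPow d s p O f + ENNReal.ofReal (2 * C) * hardyPow d s p O D f := by
        rw [ENNReal.ofReal_mul zero_le_two, ENNReal.ofReal_ofNat, mul_assoc]
        gcongr

/-- If `O ⊆ U` and every point of `U \ O` is at distance at least
`κ dist(x,D)` from each `x ∈ O`, then the zero extension `f₀ = 𝟙_O f` of a measurable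
`f` satisfies `[f₀]_{W^{s,p}(U)}^p ≤ [f]_{W^{s,p}(O)}^p + C ∫_O |f|^p dist(·,D)^{-sp}`
with `C = C(d,s,p,κ)`. -/
theorem zero_extension_estimate (d : ℕ) (hd : 1 ≤ d) (s p κ : ℝ)
    (hs0 : 0 < s) (hs1 : s < 1) (hp : 0 < p) (hκ : 0 < κ) :
    ∃ C : ℝ, 0 < C ∧
      ∀ O U D : Set (EuclideanSpace ℝ (Fin d)),
        MeasurableSet O → MeasurableSet U → O ⊆ U → D.Nonempty →
        (∀ x ∈ O, ∀ y ∈ U \ O, κ * Metric.infDist x D ≤ dist x y) →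
        ∀ f : EuclideanSpace ℝ (Fin d) → ℝ, Measurable f →
          gagliardoPow d s p U (O.indicator f) ≤
            gagliardoPow d s p O f + ENNReal.ofReal C * hardyPow d s p O D f :=
  zero_extension_estimate_general d s p κ hs0 hp hκ
end
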